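/- For 0 < a₁ < a₂, the hyperbolic catenaries with parameters a₁, a₂ intersect at some t if and only if ρ(a₁,t) = ρ(a₂,t) for some t ≥ a₂, and since t ↦ ρ(a₂,t) − ρ(a₁,t) is strictly increasing with value −ρ(a₂,a₁) < 0 at t = a₂ and limit ϱ(a₂) − ϱ(a₁) as t → ∞, such t exists (and is unique) if and only if ϱ(a₁) < ϱ(a₂). -/

import Mathlib

open Real MeasureTheory

noncomputable def rho (a t : ℝ) : ℝ :=
  ∫ τ in a..t, Real.sinh (2*a) /
    (Real.cosh τ * Real.sqrt (Real.sinh (2*τ)^2 - Real.sinh (2*a)^2))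

noncomputable def varrho (a : ℝ) : ℝ :=
  ∫ t in Set.Ioi (0:ℝ),
    Real.sinh (2*a) /
      (Real.cosh (a+t) * Real.sqrt (Real.sinh (2*(a+t))^2 - Real.sinh (2*a)^2))

/-!
Beyond `a₂` the integrand defining `ρ(a, ·)` is strictly increasing in `a` (larger numerator
`sinh 2a`, smaller radicand), so `t ↦ ρ(a₂, t) - ρ(a₁, t)` is strictly increasing on `[a₂, ∞)`.
It is continuous, equals `-ρ(a₁, a₂) < 0` at `a₂` and tends to `ϱ(a₂) - ϱ(a₁)`, so the
intermediate value theorem gives a (unique) zero exactly when that limit is positive. The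
improper integrals converge because `sinh² 2τ - sinh² 2a ≥ 2 sinh 2a · (τ - a)` and
`cosh τ ≥ e^τ / 2` bound the integrand at `τ = a + t` by a multiple of the integrand
`e^(-t) t^(-1/2)` of `Γ(1/2)`.
-/

open Set Filter Topology

theorem integrableOn_Ioi_comp_const_add_iff {E : Type*} [NormedAddCommGroup E] (f : ℝ → E)
    (a : ℝ) : IntegrableOn (fun t => f (a + t)) (Ioi 0) ↔ IntegrableOn f (Ioi a) := by
  have h := (measurePreserving_add_left volume a).integrableOn_comp_preimage
    (measurableEmbedding_addLeft a) (f := f) (s := Ioi a)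
  rwa [preimage_const_add_Ioi, sub_self] at h

theorem setIntegral_Ioi_comp_const_add {E : Type*} [NormedAddCommGroup E] [NormedSpace ℝ E]
    (f : ℝ → E) (a : ℝ) : ∫ t in Ioi 0, f (a + t) = ∫ τ in Ioi a, f τ := by
  have h := (measurePreserving_add_left volume a).setIntegral_preimage_emb
    (measurableEmbedding_addLeft a) f (Ioi a)
  rwa [preimage_const_add_Ioi, sub_self] at h

theorem continuousOn_primitive_Ici_of_integrableOn_Ioi {E : Type*} [NormedAddCommGroup E]
    [NormedSpace ℝ E] {f : ℝ → E} {a : ℝ} (hf : IntegrableOn f (Ioi a)) :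
    ContinuousOn (fun t => ∫ τ in a..t, f τ) (Ici a) := by
  have hg : Integrable ((Ioi a).indicator f) := (integrable_indicator_iff measurableSet_Ioi).2 hf
  refine (hg.continuous_primitive a).continuousOn.congr fun t (ht : a ≤ t) => ?_
  show ∫ τ in a..t, f τ = ∫ τ in a..t, (Ioi a).indicator f τ
  rw [intervalIntegral.integral_of_le ht, intervalIntegral.integral_of_le ht,
    setIntegral_indicator measurableSet_Ioi, inter_eq_left.2 Ioc_subset_Ioi_self]

theorem StrictMonoOn.exists_eq_zero_iff_of_tendsto {f : ℝ → ℝ} {c L : ℝ}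
    (hf : StrictMonoOn f (Ici c)) (hcont : ContinuousOn f (Ici c)) (hc : f c < 0)
    (hL : Tendsto f atTop (𝓝 L)) : (∃ t, c ≤ t ∧ f t = 0) ↔ 0 < L := by
  constructor
  · rintro ⟨t, ht, hft⟩
    have hpos : 0 < f (t + 1) := hft ▸ hf ht (mem_Ici.2 (by linarith)) (lt_add_one t)
    refine hpos.trans_le (ge_of_tendsto hL ?_)
    filter_upwards [eventually_ge_atTop (t + 1)] with s hs
    exact hf.monotoneOn (mem_Ici.2 (by linarith)) (mem_Ici.2 (by linarith)) hs
  · intro hpos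
    obtain ⟨T, hT⟩ := (hL.eventually (eventually_gt_nhds hpos)).exists_forall_of_atTop
    have hcT : c ≤ max T c := le_max_right T c
    obtain ⟨t, ht, hft⟩ := intermediate_value_Icc hcT (hcont.mono Icc_subset_Ici_self)
      ⟨hc.le, (hT _ (le_max_left T c)).le⟩
    exact ⟨t, ht.1, hft⟩

noncomputable def rhoIntegrand (a τ : ℝ) : ℝ :=
  sinh (2*a) / (cosh τ * √(sinh (2*τ)^2 - sinh (2*a)^2))

theorem rho_eq_intervalIntegral (a t : ℝ) : rho a t = ∫ τ in a..t, rhoIntegrand a τ := rfl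

theorem varrho_eq_setIntegral (a : ℝ) : varrho a = ∫ τ in Ioi a, rhoIntegrand a τ :=
  setIntegral_Ioi_comp_const_add (rhoIntegrand a) a

theorem sinh_sq_sub_sinh_sq (x y : ℝ) :
    sinh x ^ 2 - sinh y ^ 2 = sinh (x + y) * sinh (x - y) := by
  rw [sinh_add, sinh_sub]
  linear_combination sinh y ^ 2 * cosh_sq x - sinh x ^ 2 * cosh_sq y

theorem mul_sub_le_sinh_sq_sub_sinh_sq {a τ : ℝ} (ha : 0 ≤ a) (hτ : a ≤ τ) :
    2 * sinh (2*a) * (τ - a) ≤ sinh (2*τ)^2 - sinh (2*a)^2 := by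
  rw [sinh_sq_sub_sinh_sq]
  have h₁ : sinh (2*a) ≤ sinh (2*τ + 2*a) := sinh_le_sinh.2 (by linarith)
  have h₂ : 2 * (τ - a) ≤ sinh (2*τ - 2*a) := by
    rw [← mul_sub]; exact self_le_sinh_iff.2 (by linarith)
  have h₀ : 0 ≤ sinh (2*a) := sinh_nonneg_iff.2 (by linarith)
  nlinarith

theorem sinh_sq_sub_sinh_sq_pos {a τ : ℝ} (ha : 0 < a) (hτ : a < τ) :
    0 < sinh (2*τ)^2 - sinh (2*a)^2 := by
  have hs : 0 < sinh (2*a) := sinh_pos_iff.2 (by linarith)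
  have hτa : 0 < τ - a := by linarith
  have : 0 < 2 * sinh (2*a) * (τ - a) := by positivity
  exact this.trans_le (mul_sub_le_sinh_sq_sub_sinh_sq ha.le hτ.le)

theorem rhoIntegrand_pos {a τ : ℝ} (ha : 0 < a) (hτ : a < τ) : 0 < rhoIntegrand a τ := by
  have := sinh_pos_iff.2 (by linarith : 0 < 2*a)
  have := sinh_sq_sub_sinh_sq_pos ha hτ
  unfold rhoIntegrand; positivity

theorem rhoIntegrand_lt_rhoIntegrand {a₁ a₂ τ : ℝ} (h1 : 0 < a₁) (h12 : a₁ < a₂)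
    (h2 : a₂ < τ) :
    rhoIntegrand a₁ τ < rhoIntegrand a₂ τ := by
  have s₁ : 0 < sinh (2*a₁) := sinh_pos_iff.2 (by linarith)
  have s₁₂ : sinh (2*a₁) < sinh (2*a₂) := sinh_lt_sinh.2 (by linarith)
  have s₂ : 0 < sinh (2*a₂) := s₁.trans s₁₂
  have d₁ := sinh_sq_sub_sinh_sq_pos h1 (h12.trans h2)
  have d₂ := sinh_sq_sub_sinh_sq_pos (h1.trans h12) h2
  unfold rhoIntegrand
  calc sinh (2*a₁) / (cosh τ * √(sinh (2*τ)^2 - sinh (2*a₁)^2))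
      < sinh (2*a₂) / (cosh τ * √(sinh (2*τ)^2 - sinh (2*a₁)^2)) := by gcongr
    _ ≤ sinh (2*a₂) / (cosh τ * √(sinh (2*τ)^2 - sinh (2*a₂)^2)) := by gcongr

theorem rhoIntegrand_add_le {a t : ℝ} (ha : 0 < a) (ht : 0 < t) :
    rhoIntegrand a (a + t) ≤
      √(2 * sinh (2*a)) * exp (-a) * (exp (-t) * t ^ ((1/2 : ℝ) - 1)) := by
  set s := sinh (2*a)
  have hs : 0 < s := sinh_pos_iff.2 (by linarith)
  have hcosh : exp (a + t) / 2 ≤ cosh (a + t) := by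
    rw [cosh_eq]; linarith [exp_pos (-(a + t))]
  have hsqrt : √(2 * s) * √t ≤ √(sinh (2*(a + t))^2 - s^2) := by
    rw [← sqrt_mul (by positivity)]
    refine sqrt_le_sqrt ?_
    simpa [mul_assoc] using mul_sub_le_sinh_sq_sub_sinh_sq ha.le (le_add_of_nonneg_right ht.le)
  rw [show (1/2 : ℝ) - 1 = -(1/2) by norm_num, rpow_neg ht.le, ← sqrt_eq_rpow]
  calc rhoIntegrand a (a + t) ≤ s / (exp (a + t) / 2 * (√(2 * s) * √t)) := by
        unfold rhoIntegrand; gcongr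
    _ = √(2 * s) * exp (-a) * (exp (-t) * (√t)⁻¹) := by
        rw [exp_add, exp_neg, exp_neg]
        field_simp
        rw [sq_sqrt (by positivity)]

theorem integrableOn_rhoIntegrand {a : ℝ} (ha : 0 < a) :
    IntegrableOn (rhoIntegrand a) (Ioi a) := by
  rw [← integrableOn_Ioi_comp_const_add_iff]
  refine ((GammaIntegral_convergent one_half_pos).const_mul
    (√(2 * sinh (2*a)) * exp (-a))).mono'
    (Measurable.aestronglyMeasurable (by unfold rhoIntegrand; fun_prop)) ?_
  filter_upwards [self_mem_ae_restrict measurableSet_Ioi] with t (ht : 0 < t)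
  rw [Real.norm_of_nonneg (rhoIntegrand_pos ha (by linarith)).le]
  exact rhoIntegrand_add_le ha ht

theorem intervalIntegrable_rhoIntegrand {a s t : ℝ} (ha : 0 < a) (hs : a ≤ s) (ht : a ≤ t) :
    IntervalIntegrable (rhoIntegrand a) volume s t :=
  intervalIntegrable_iff.2 <|
    (integrableOn_rhoIntegrand ha).mono_set fun _ hx => (le_min hs ht).trans_lt hx.1

theorem tendsto_rho_varrho {a : ℝ} (ha : 0 < a) : Tendsto (rho a) atTop (𝓝 (varrho a)) := by
  rw [varrho_eq_setIntegral]
  exact intervalIntegral_tendsto_integral_Ioi a (integrableOn_rhoIntegrand ha) tendsto_id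

theorem continuousOn_rho {a : ℝ} (ha : 0 < a) : ContinuousOn (rho a) (Ici a) :=
  continuousOn_primitive_Ici_of_integrableOn_Ioi (integrableOn_rhoIntegrand ha)

theorem rho_pos {a t : ℝ} (ha : 0 < a) (ht : a < t) : 0 < rho a t :=
  intervalIntegral.intervalIntegral_pos_of_pos_on
    (intervalIntegrable_rhoIntegrand ha le_rfl ht.le) (fun _ hx => rhoIntegrand_pos ha hx.1) ht

theorem rho_sub_rho {a s t : ℝ} (ha : 0 < a) (hs : a ≤ s) (ht : a ≤ t) :
    rho a t - rho a s = ∫ τ in s..t, rhoIntegrand a τ :=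
  intervalIntegral.integral_interval_sub_left (intervalIntegrable_rhoIntegrand ha le_rfl ht)
    (intervalIntegrable_rhoIntegrand ha le_rfl hs)

theorem strictMonoOn_rho_sub_rho {a₁ a₂ : ℝ} (h1 : 0 < a₁) (h12 : a₁ < a₂) :
    StrictMonoOn (fun t => rho a₂ t - rho a₁ t) (Ici a₂) := by
  intro s (hs : a₂ ≤ s) t (ht : a₂ ≤ t) hst
  have ha₂ : 0 < a₂ := h1.trans h12
  have i₁ := intervalIntegrable_rhoIntegrand h1 (h12.le.trans hs) (h12.le.trans ht)
  have i₂ := intervalIntegrable_rhoIntegrand ha₂ hs ht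
  have hpos : 0 < ∫ τ in s..t, (rhoIntegrand a₂ τ - rhoIntegrand a₁ τ) :=
    intervalIntegral.intervalIntegral_pos_of_pos_on (i₂.sub i₁)
      (fun τ hτ => sub_pos.2 (rhoIntegrand_lt_rhoIntegrand h1 h12 (hs.trans_lt hτ.1))) hst
  rw [intervalIntegral.integral_sub i₂ i₁, ← rho_sub_rho ha₂ hs ht,
    ← rho_sub_rho h1 (h12.le.trans hs) (h12.le.trans ht)] at hpos
  change rho a₂ s - rho a₁ s < rho a₂ t - rho a₁ t
  linarith

theorem intersection_iff (a₁ a₂ : ℝ) (h1 : 0 < a₁) (h12 : a₁ < a₂) :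
    ((∃ t, a₂ ≤ t ∧ rho a₁ t = rho a₂ t) ↔ varrho a₁ < varrho a₂) ∧
    (∀ t₁ t₂, a₂ ≤ t₁ → a₂ ≤ t₂ → rho a₁ t₁ = rho a₂ t₁ → rho a₁ t₂ = rho a₂ t₂ →
      t₁ = t₂) := by
  have ha₂ : 0 < a₂ := h1.trans h12
  have hmono := strictMonoOn_rho_sub_rho h1 h12
  have hcont : ContinuousOn (fun t => rho a₂ t - rho a₁ t) (Ici a₂) :=
    (continuousOn_rho ha₂).sub ((continuousOn_rho h1).mono (Ici_subset_Ici.2 h12.le))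
  have hstart : rho a₂ a₂ - rho a₁ a₂ < 0 := by
    simpa [rho_eq_intervalIntegral] using rho_pos h1 h12
  have hzero := hmono.exists_eq_zero_iff_of_tendsto hcont hstart
    ((tendsto_rho_varrho ha₂).sub (tendsto_rho_varrho h1))
  simp only [sub_eq_zero, sub_pos, eq_comm (a := rho a₂ _)] at hzero
  refine ⟨hzero, fun t₁ t₂ ht₁ ht₂ e₁ e₂ => hmono.injOn ht₁ ht₂ ?_⟩
  simp only [e₁, e₂, sub_self]
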